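/- (The three effects of information.) In the binary monopoly model with D_L and D_H three times continuously differentiable, the optimal-price function p is twice continuously differentiable on (0,1), the value function W^α is twice differentiable on (0,1), and for every μ ∈ (0,1): (W^α)''(μ) = p'(μ)²·[(1−μ)·(V_L^α)''(p(μ)) + μ·(V_H^α)''(p(μ))] + 2·p'(μ)·[(V_H^α)'(p(μ)) − (V_L^α)'(p(μ))] + p''(μ)·[(1−μ)·(V_L^α)'(p(μ)) + μ·(V_H^α)'(p(μ))]. -/

import Mathlib

/-!
The first-order condition `(1 - μ) R_L'(q) + μ R_H'(q) = 0` is linear in the belief `μ`, so the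
optimal price has the explicit inverse `μ = R_L'(q) / (R_L'(q) - R_H'(q))`. On `[p_L*, p_H*]` this
map is `C²` with positive derivative, hence `p` is its `C²` inverse on `(0, 1)`. The formula for
`(W^α)''` is then the chain rule applied twice to `(1 - μ) V_L^α(p(μ)) + μ V_H^α(p(μ))`.
-/

open Set Filter Topology

theorem continuousAt_of_local_left_inverse_strictMonoOn {φ p : ℝ → ℝ} {s : Set ℝ} {x : ℝ}
    (hφ : StrictMonoOn φ s) (hs : s ∈ 𝓝 (p x))
    (hinv : ∀ᶠ y in 𝓝 x, p y ∈ s ∧ φ (p y) = y) : ContinuousAt p x := by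
  obtain ⟨l, u, ⟨hl, hu⟩, hlu⟩ := mem_nhds_iff_exists_Ioo_subset.1 hs
  obtain ⟨hxs, hx⟩ := hinv.self_of_nhds
  rw [ContinuousAt, tendsto_order]
  refine ⟨fun b hb => ?_, fun b hb => ?_⟩
  · obtain ⟨c, hbc, hcx⟩ := exists_between (max_lt hb hl)
    have hcs : c ∈ s := hlu ⟨(le_max_right _ _).trans_lt hbc, hcx.trans hu⟩
    have hφc : φ c < x := hx ▸ hφ hcs hxs hcx
    filter_upwards [hinv, lt_mem_nhds hφc] with y ⟨hys, hy⟩ hcy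
    exact ((le_max_left _ _).trans_lt hbc).trans ((hφ.lt_iff_lt hcs hys).1 (by rwa [hy]))
  · obtain ⟨c, hxc, hcb⟩ := exists_between (lt_min hb hu)
    have hcs : c ∈ s := hlu ⟨hl.trans hxc, hcb.trans_le (min_le_right _ _)⟩
    have hφc : x < φ c := hx ▸ hφ hxs hcs hxc
    filter_upwards [hinv, gt_mem_nhds hφc] with y ⟨hys, hy⟩ hcy
    exact ((hφ.lt_iff_lt hys hcs).1 (by rwa [hy])).trans (hcb.trans_le (min_le_left _ _))

theorem contDiffOn_of_local_left_inverse {φ p : ℝ → ℝ} {s : Set ℝ} (hs : IsOpen s)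
    (hp : ContinuousOn p s) (hinv : ∀ x ∈ s, φ (p x) = x) (n : ℕ)
    (hφ : ∀ x ∈ s, ContDiffAt ℝ n φ (p x)) (hφ' : ∀ x ∈ s, deriv φ (p x) ≠ 0) :
    ContDiffOn ℝ n p s := by
  induction n with
  | zero => exact contDiffOn_zero.2 hp
  | succ n ih =>
    have hpn : ContDiffOn ℝ n p s :=
      ih fun x hx => (hφ x hx).of_le (by exact_mod_cast n.le_succ)
    have hderiv : ∀ x ∈ s, HasDerivAt p (deriv φ (p x))⁻¹ x := fun x hx =>
      HasDerivAt.of_local_left_inverse (hp.continuousAt (hs.mem_nhds hx))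
        ((hφ x hx).differentiableAt (by simp)).hasDerivAt (hφ' x hx)
        (eventually_of_mem (hs.mem_nhds hx) hinv)
    rw [Nat.cast_succ, contDiffOn_succ_iff_deriv_of_isOpen hs]
    refine ⟨fun x hx => (hderiv x hx).differentiableAt.differentiableWithinAt, by simp, ?_⟩
    refine ContDiffOn.congr (fun x hx => ?_) fun x hx => (hderiv x hx).deriv
    exact (((hφ x hx).derivWithin le_rfl).comp_contDiffWithinAt x (hpn x hx)).inv (hφ' x hx)

theorem contDiffOn_succ_of_hasDerivAt {F f : ℝ → ℝ} {s : Set ℝ} {n : ℕ} (hs : IsOpen s)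
    (hF : ∀ x ∈ s, HasDerivAt F (f x) x) (hf : ContDiffOn ℝ n f s) :
    ContDiffOn ℝ (n + 1) F s := by
  rw [contDiffOn_succ_iff_deriv_of_isOpen hs]
  exact ⟨fun x hx => (hF x hx).differentiableAt.differentiableWithinAt, by simp,
    hf.congr fun x hx => (hF x hx).deriv⟩

theorem ContDiffOn.hasDerivAt_of_isOpen {f : ℝ → ℝ} {s : Set ℝ} {x : ℝ} {n : WithTop ℕ∞}
    (hf : ContDiffOn ℝ n f s) (hn : n ≠ 0) (hs : IsOpen s) (hx : x ∈ s) :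
    HasDerivAt f (deriv f x) x :=
  ((hf.differentiableOn hn) x hx).differentiableAt (hs.mem_nhds hx) |>.hasDerivAt

theorem ContDiffOn.hasDerivAt_deriv {f : ℝ → ℝ} {s : Set ℝ} {x : ℝ} (hf : ContDiffOn ℝ 2 f s)
    (hs : IsOpen s) (hx : x ∈ s) : HasDerivAt (deriv f) (deriv (deriv f) x) x :=
  (hf.deriv_of_isOpen hs (by norm_num : (1 : WithTop ℕ∞) + 1 ≤ 2)).hasDerivAt_of_isOpen
    one_ne_zero hs hx

section Mixture

variable {f g p : ℝ → ℝ}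

theorem hasDerivAt_mix_comp {x f' g' p' : ℝ} (hf : HasDerivAt f f' (p x))
    (hg : HasDerivAt g g' (p x)) (hp : HasDerivAt p p' x) :
    HasDerivAt (fun μ => (1 - μ) * f (p μ) + μ * g (p μ))
      (g (p x) - f (p x) + p' * ((1 - x) * f' + x * g')) x := by
  refine ((((hasDerivAt_id' x).const_sub 1).mul (hf.comp x hp)).add
    ((hasDerivAt_id' x).mul (hg.comp x hp))).congr_deriv ?_
  simp only [Function.comp_apply]
  ring

theorem hasDerivAt_deriv_mix_comp {s t : Set ℝ} {x : ℝ} (hs : IsOpen s) (ht : IsOpen t)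
    (hf : ContDiffOn ℝ 2 f t) (hg : ContDiffOn ℝ 2 g t) (hp : ContDiffOn ℝ 2 p s)
    (hpst : MapsTo p s t) (hx : x ∈ s) :
    HasDerivAt (deriv fun μ => (1 - μ) * f (p μ) + μ * g (p μ))
      ((deriv p x) ^ 2 * ((1 - x) * deriv (deriv f) (p x) + x * deriv (deriv g) (p x)) +
        2 * deriv p x * (deriv g (p x) - deriv f (p x)) +
        deriv (deriv p) x * ((1 - x) * deriv f (p x) + x * deriv g (p x))) x := by
  have hf' {y} (hy : y ∈ s) := hf.hasDerivAt_of_isOpen two_ne_zero ht (hpst hy)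
  have hg' {y} (hy : y ∈ s) := hg.hasDerivAt_of_isOpen two_ne_zero ht (hpst hy)
  have hp' {y} (hy : y ∈ s) := hp.hasDerivAt_of_isOpen two_ne_zero hs hy
  have hW : ∀ y ∈ s, HasDerivAt (fun μ => (1 - μ) * f (p μ) + μ * g (p μ))
      (g (p y) - f (p y) + deriv p y * ((1 - y) * deriv f (p y) + y * deriv g (p y))) y :=
    fun y hy => hasDerivAt_mix_comp (hf' hy) (hg' hy) (hp' hy)
  have hW' := ((hg' hx).comp x (hp' hx)).sub ((hf' hx).comp x (hp' hx)) |>.add <|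
    (hp.hasDerivAt_deriv hs hx).mul <| hasDerivAt_mix_comp (hf.hasDerivAt_deriv ht (hpst hx))
      (hg.hasDerivAt_deriv ht (hpst hx)) (hp' hx)
  refine (hW'.congr_deriv (by ring)).congr_of_eventuallyEq ?_
  filter_upwards [hs.mem_nhds hx] with y hy using (hW y hy).deriv

end Mixture

section OptimalPrice

variable {f g : ℝ → ℝ} {a b : ℝ}

noncomputable def beliefOfPrice (f g : ℝ → ℝ) (q : ℝ) : ℝ := f q / (f q - g q)

theorem beliefOfPrice_eq_of_foc {q μ : ℝ} (hfg : f q ≠ g q)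
    (hfoc : (1 - μ) * f q + μ * g q = 0) : beliefOfPrice f g q = μ := by
  rw [beliefOfPrice, div_eq_iff (sub_ne_zero.2 hfg)]
  linear_combination hfoc

theorem hasDerivAt_beliefOfPrice {q f' g' : ℝ} (hf : HasDerivAt f f' q) (hg : HasDerivAt g g' q)
    (hfg : f q ≠ g q) :
    HasDerivAt (beliefOfPrice f g) ((f q * g' - f' * g q) / (f q - g q) ^ 2) q :=
  (hf.div (hf.sub hg) (sub_ne_zero.2 hfg)).congr_deriv (by simp only [Pi.sub_apply]; ring)

theorem contDiffAt_beliefOfPrice {q : ℝ} {n : WithTop ℕ∞} (hf : ContDiffAt ℝ n f q)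
    (hg : ContDiffAt ℝ n g q) (hfg : f q ≠ g q) : ContDiffAt ℝ n (beliefOfPrice f g) q :=
  hf.div (hf.sub hg) (sub_ne_zero.2 hfg)

theorem signs_of_strictAntiOn_Icc (hf : StrictAntiOn f (Icc a b)) (hg : StrictAntiOn g (Icc a b))
    (hfa : f a = 0) (hgb : g b = 0) (hab : a < b) {q : ℝ} (hq : q ∈ Icc a b) :
    f q ≤ 0 ∧ 0 ≤ g q ∧ f q < g q := by
  have ha : a ∈ Icc a b := left_mem_Icc.2 hab.le
  have hb : b ∈ Icc a b := right_mem_Icc.2 hab.le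
  have hfq : f q ≤ 0 := hfa ▸ hf.antitoneOn ha hq hq.1
  have hgq : 0 ≤ g q := hgb ▸ hg.antitoneOn hq hb hq.2
  refine ⟨hfq, hgq, ?_⟩
  rcases hq.1.eq_or_lt with rfl | haq
  · linarith [hg ha hb hab]
  · linarith [hf ha hq haq]

theorem deriv_beliefOfPrice_pos {q : ℝ} (hf : DifferentiableAt ℝ f q)
    (hg : DifferentiableAt ℝ g q) (hf' : deriv f q < 0) (hg' : deriv g q < 0) (hfq : f q ≤ 0)
    (hgq : 0 ≤ g q) (hfg : f q < g q) : 0 < deriv (beliefOfPrice f g) q := by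
  rw [(hasDerivAt_beliefOfPrice hf.hasDerivAt hg.hasDerivAt hfg.ne).deriv]
  have hnum : 0 < f q * deriv g q - deriv f q * g q := by
    rcases hfq.lt_or_eq with hfq | hfq <;> nlinarith
  exact div_pos hnum (sq_pos_of_neg (sub_neg.2 hfg))

theorem mem_Ioo_of_foc {q μ : ℝ} (hfa : f a = 0) (hgb : g b = 0) (hfga : f a < g a)
    (hfgb : f b < g b) (hμ : μ ∈ Ioo 0 1) (hq : q ∈ Icc a b)
    (hfoc : (1 - μ) * f q + μ * g q = 0) : q ∈ Ioo a b := by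
  obtain ⟨hμ0, hμ1⟩ := hμ
  refine ⟨hq.1.lt_of_ne ?_, hq.2.lt_of_ne ?_⟩ <;> rintro rfl <;> nlinarith

theorem contDiffOn_optimalPrice {p : ℝ → ℝ} {n : ℕ} (hn : n ≠ 0)
    (hf : ∀ q ∈ Icc a b, ContDiffAt ℝ n f q) (hg : ∀ q ∈ Icc a b, ContDiffAt ℝ n g q)
    (hf' : ∀ q ∈ Icc a b, deriv f q < 0) (hg' : ∀ q ∈ Icc a b, deriv g q < 0)
    (hfa : f a = 0) (hgb : g b = 0) (hab : a < b)
    (hp : ∀ μ ∈ Icc (0 : ℝ) 1, p μ ∈ Icc a b ∧ (1 - μ) * f (p μ) + μ * g (p μ) = 0) :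
    ContDiffOn ℝ n p (Ioo 0 1) := by
  have hfd : ∀ q ∈ Icc a b, DifferentiableAt ℝ f q := fun q hq =>
    (hf q hq).differentiableAt (by exact_mod_cast hn)
  have hgd : ∀ q ∈ Icc a b, DifferentiableAt ℝ g q := fun q hq =>
    (hg q hq).differentiableAt (by exact_mod_cast hn)
  have anti {h : ℝ → ℝ} (hd : ∀ q ∈ Icc a b, DifferentiableAt ℝ h q)
      (h' : ∀ q ∈ Icc a b, deriv h q < 0) : StrictAntiOn h (Icc a b) :=
    strictAntiOn_of_deriv_neg (convex_Icc a b)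
      (fun q hq => (hd q hq).continuousAt.continuousWithinAt)
      fun q hq => h' q (interior_subset hq)
  have hsign := fun q (hq : q ∈ Icc a b) =>
    signs_of_strictAntiOn_Icc (anti hfd hf') (anti hgd hg') hfa hgb hab hq
  have hpos : ∀ q ∈ Icc a b, 0 < deriv (beliefOfPrice f g) q := fun q hq =>
    deriv_beliefOfPrice_pos (hfd q hq) (hgd q hq) (hf' q hq) (hg' q hq) (hsign q hq).1
      (hsign q hq).2.1 (hsign q hq).2.2
  have hmono : StrictMonoOn (beliefOfPrice f g) (Icc a b) :=
    strictMonoOn_of_deriv_pos (convex_Icc a b)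
      (fun q hq => (hasDerivAt_beliefOfPrice (hfd q hq).hasDerivAt (hgd q hq).hasDerivAt
        (hsign q hq).2.2.ne).continuousAt.continuousWithinAt)
      fun q hq => hpos q (interior_subset hq)
  have hpIcc : ∀ μ ∈ Ioo (0 : ℝ) 1, p μ ∈ Icc a b := fun μ hμ =>
    (hp μ (Ioo_subset_Icc_self hμ)).1
  have hinv : ∀ μ ∈ Ioo (0 : ℝ) 1, beliefOfPrice f g (p μ) = μ := fun μ hμ =>
    beliefOfPrice_eq_of_foc (hsign _ (hpIcc μ hμ)).2.2.ne (hp μ (Ioo_subset_Icc_self hμ)).2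
  have hpIoo : ∀ μ ∈ Ioo (0 : ℝ) 1, p μ ∈ Ioo a b := fun μ hμ =>
    mem_Ioo_of_foc hfa hgb (hsign a (left_mem_Icc.2 hab.le)).2.2
      (hsign b (right_mem_Icc.2 hab.le)).2.2 hμ (hpIcc μ hμ) (hp μ (Ioo_subset_Icc_self hμ)).2
  have hcont : ContinuousOn p (Ioo 0 1) := fun μ hμ =>
    (continuousAt_of_local_left_inverse_strictMonoOn hmono
      (Icc_mem_nhds (hpIoo μ hμ).1 (hpIoo μ hμ).2)
      (eventually_of_mem (isOpen_Ioo.mem_nhds hμ) fun ν hν => ⟨hpIcc ν hν, hinv ν hν⟩)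
      ).continuousWithinAt
  exact contDiffOn_of_local_left_inverse isOpen_Ioo hcont hinv n
    (fun μ hμ => contDiffAt_beliefOfPrice (hf _ (hpIcc μ hμ)) (hg _ (hpIcc μ hμ))
      (hsign _ (hpIcc μ hμ)).2.2.ne)
    fun μ hμ => (hpos _ (hpIcc μ hμ)).ne'

end OptimalPrice

theorem stmt_3_general
    (I : Set ℝ) (DL DH RL RH : ℝ → ℝ) (pLs pHs : ℝ)
    (hIopen : IsOpen I) (hIconv : Convex ℝ I)
    (hRL : RL = fun q => q * DL q) (hRH : RH = fun q => q * DH q)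
    (hDL : ContDiffOn ℝ 3 DL I) (hDH : ContDiffOn ℝ 3 DH I)
    (hRL'' : ∀ q ∈ I, deriv (deriv RL) q < 0) (hRH'' : ∀ q ∈ I, deriv (deriv RH) q < 0)
    (hpLs : pLs ∈ I) (hpHs : pHs ∈ I) (hlt : pLs < pHs)
    (hRL' : deriv RL pLs = 0) (hRH' : deriv RH pHs = 0)
    (p : ℝ → ℝ)
    (hp : ∀ μ ∈ Set.Icc (0:ℝ) 1, p μ ∈ Set.Icc pLs pHs ∧
      (1 - μ) * deriv RL (p μ) + μ * deriv RH (p μ) = 0)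
    (α : ℝ)
    (CSL CSH VL VH : ℝ → ℝ)
    (hCSL : ∀ q ∈ I, HasDerivAt CSL (-(DL q)) q)
    (hCSH : ∀ q ∈ I, HasDerivAt CSH (-(DH q)) q)
    (hVL : VL = fun q => α * CSL q + (1 - α) * RL q)
    (hVH : VH = fun q => α * CSH q + (1 - α) * RH q)
    (W : ℝ → ℝ)
    (hW : W = fun μ => (1 - μ) * VL (p μ) + μ * VH (p μ)) :
    ContDiffOn ℝ 2 p (Set.Ioo 0 1) ∧
    (∀ μ ∈ Set.Ioo (0:ℝ) 1, DifferentiableAt ℝ W μ ∧ DifferentiableAt ℝ (deriv W) μ) ∧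
    ∀ μ ∈ Set.Ioo (0:ℝ) 1,
      deriv (deriv W) μ =
        (deriv p μ) ^ 2 *
            ((1 - μ) * deriv (deriv VL) (p μ) + μ * deriv (deriv VH) (p μ)) +
          2 * deriv p μ * (deriv VH (p μ) - deriv VL (p μ)) +
          deriv (deriv p) μ * ((1 - μ) * deriv VL (p μ) + μ * deriv VH (p μ)) := by
  have hIcc : Icc pLs pHs ⊆ I := hIconv.ordConnected.out hpLs hpHs
  have hRLc : ContDiffOn ℝ 3 RL I := hRL ▸ contDiffOn_id.mul hDL
  have hRHc : ContDiffOn ℝ 3 RH I := hRH ▸ contDiffOn_id.mul hDH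
  have hpc : ContDiffOn ℝ 2 p (Ioo 0 1) := by
    refine contDiffOn_optimalPrice (n := 2) two_ne_zero (fun q hq => ?_) (fun q hq => ?_)
      (fun q hq => hRL'' q (hIcc hq)) (fun q hq => hRH'' q (hIcc hq)) hRL' hRH' hlt hp
    · exact (hRLc.deriv_of_isOpen hIopen le_rfl).contDiffAt (hIopen.mem_nhds (hIcc hq))
    · exact (hRHc.deriv_of_isOpen hIopen le_rfl).contDiffAt (hIopen.mem_nhds (hIcc hq))
  have hCSLc : ContDiffOn ℝ 2 CSL I := contDiffOn_succ_of_hasDerivAt (n := 1) hIopen hCSL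
    (hDL.neg.of_le (by norm_num))
  have hCSHc : ContDiffOn ℝ 2 CSH I := contDiffOn_succ_of_hasDerivAt (n := 1) hIopen hCSH
    (hDH.neg.of_le (by norm_num))
  have hVLc : ContDiffOn ℝ 2 VL I :=
    hVL ▸ (contDiffOn_const.mul hCSLc).add (contDiffOn_const.mul (hRLc.of_le (by norm_num)))
  have hVHc : ContDiffOn ℝ 2 VH I :=
    hVH ▸ (contDiffOn_const.mul hCSHc).add (contDiffOn_const.mul (hRHc.of_le (by norm_num)))
  have hpI : MapsTo p (Ioo 0 1) I := fun μ hμ => hIcc (hp μ (Ioo_subset_Icc_self hμ)).1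
  have hW'' := fun μ (hμ : μ ∈ Ioo (0 : ℝ) 1) =>
    hW ▸ hasDerivAt_deriv_mix_comp isOpen_Ioo hIopen hVLc hVHc hpc hpI hμ
  refine ⟨hpc, fun μ hμ => ⟨?_, (hW'' μ hμ).differentiableAt⟩, fun μ hμ => (hW'' μ hμ).deriv⟩
  exact hW ▸ (hasDerivAt_mix_comp (hVLc.hasDerivAt_of_isOpen two_ne_zero hIopen (hpI hμ))
    (hVHc.hasDerivAt_of_isOpen two_ne_zero hIopen (hpI hμ))
    (hpc.hasDerivAt_of_isOpen two_ne_zero isOpen_Ioo hμ)).differentiableAt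

/-- (The three effects of information.) In the binary monopoly model with
`D_L, D_H` three times continuously differentiable, the optimal-price function is `C²` on
`(0,1)`, the value function `W^α` is twice differentiable on `(0,1)`, and its second
derivative decomposes into the three effects of information. -/
theorem stmt_3
    (I : Set ℝ) (DL DH RL RH : ℝ → ℝ) (pLs pHs : ℝ)
    (hIopen : IsOpen I) (hIconv : Convex ℝ I) (hIpos : I ⊆ Set.Ioi (0:ℝ))
    (hRL : RL = fun q => q * DL q) (hRH : RH = fun q => q * DH q)
    (hDL : ContDiffOn ℝ 3 DL I) (hDH : ContDiffOn ℝ 3 DH I)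
    (hDLpos : ∀ q ∈ I, 0 < DL q) (hDHpos : ∀ q ∈ I, 0 < DH q)
    (hDL' : ∀ q ∈ I, deriv DL q < 0) (hDH' : ∀ q ∈ I, deriv DH q < 0)
    (hRL'' : ∀ q ∈ I, deriv (deriv RL) q < 0) (hRH'' : ∀ q ∈ I, deriv (deriv RH) q < 0)
    (hpLs : pLs ∈ I) (hpHs : pHs ∈ I) (hlt : pLs < pHs)
    (hRL' : deriv RL pLs = 0) (hRH' : deriv RH pHs = 0)
    (p : ℝ → ℝ)
    (hp : ∀ μ ∈ Set.Icc (0:ℝ) 1, p μ ∈ Set.Icc pLs pHs ∧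
      (1 - μ) * deriv RL (p μ) + μ * deriv RH (p μ) = 0)
    (α : ℝ) (hα : α ∈ Set.Ioc (0:ℝ) 1)
    (CSL CSH VL VH : ℝ → ℝ)
    (hCSL : ∀ q ∈ I, HasDerivAt CSL (-(DL q)) q)
    (hCSH : ∀ q ∈ I, HasDerivAt CSH (-(DH q)) q)
    (hVL : VL = fun q => α * CSL q + (1 - α) * RL q)
    (hVH : VH = fun q => α * CSH q + (1 - α) * RH q)
    (W : ℝ → ℝ)
    (hW : W = fun μ => (1 - μ) * VL (p μ) + μ * VH (p μ)) :
    ContDiffOn ℝ 2 p (Set.Ioo 0 1) ∧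
    (∀ μ ∈ Set.Ioo (0:ℝ) 1, DifferentiableAt ℝ W μ ∧ DifferentiableAt ℝ (deriv W) μ) ∧
    ∀ μ ∈ Set.Ioo (0:ℝ) 1,
      deriv (deriv W) μ =
        (deriv p μ) ^ 2 *
            ((1 - μ) * deriv (deriv VL) (p μ) + μ * deriv (deriv VH) (p μ)) +
          2 * deriv p μ * (deriv VH (p μ) - deriv VL (p μ)) +
          deriv (deriv p) μ * ((1 - μ) * deriv VL (p μ) + μ * deriv VH (p μ)) :=
  stmt_3_general I DL DH RL RH pLs pHs hIopen hIconv hRL hRH hDL hDH hRL'' hRH'' hpLs hpHs hlt hRL'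
    hRH' p hp α CSL CSH VL VH hCSL hCSH hVL hVH W hW
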